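/- arXiv:1711.07441 — 7 statements merged into one kernel-verified Lean document; each statement's English description precedes it below -/
import Mathlib

section
/- If z ∈ R^d satisfies ||x_m - z||² ≠ w² for all m, then f is differentiable in a neighborhood of z with gradient ∇f(z) = Σ_{i ∈ I(z)} 2(z - x_i), where I(z) = {i : ||x_i - z||² < w²}. -/
set_option maxHeartbeats 1000000

open MeasureTheory Finset

variable {E : Type*} [NormedAddCommGroup E] [InnerProductSpace ℝ E] [CompleteSpace E]

lemma grad_norm_sq (c y : E) : HasGradientAt (fun v => ‖c - v‖ ^ 2) ((2:ℝ) • (y - c)) y := by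
  rw [hasGradientAt_iff_hasFDerivAt]
  have h : HasFDerivAt (fun v : E => c - v) ((0:E →L[ℝ] E) - ContinuousLinearMap.id ℝ E) y :=
    (hasFDerivAt_const c y).sub (hasFDerivAt_id y)
  convert h.norm_sq using 1
  ext v
  simp [two_smul, real_inner_smul_left, inner_sub_left, inner_sub_right, real_inner_comm]
  ext v
  simp [two_smul, real_inner_smul_left, inner_sub_left, inner_sub_right, real_inner_comm]


lemma grad_min (c y : E) (w : ℝ) (h : ‖c - y‖ ^ 2 ≠ w ^ 2) :
    HasGradientAt (fun v => min (‖c - v‖ ^ 2) (w ^ 2))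
      (if ‖c - y‖ ^ 2 < w ^ 2 then (2:ℝ) • (y - c) else 0) y := by
  have hcont : Continuous fun v : E => ‖c - v‖ ^ 2 := by continuity
  rcases lt_or_gt_of_ne h with hlt | hgt
  · rw [if_pos hlt]
    apply (grad_norm_sq c y).congr_of_eventuallyEq
    have hev : ∀ᶠ v in nhds y, ‖c - v‖ ^ 2 < w ^ 2 :=
      (isOpen_lt hcont continuous_const).mem_nhds hlt
    filter_upwards [hev] with v hv
    exact min_eq_left hv.le
  · rw [if_neg (not_lt.mpr hgt.le)]
    apply (hasGradientAt_const y (w ^ 2)).congr_of_eventuallyEq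
    have hev : ∀ᶠ v in nhds y, w ^ 2 < ‖c - v‖ ^ 2 :=
      (isOpen_lt continuous_const hcont).mem_nhds hgt
    filter_upwards [hev] with v hv
    exact min_eq_right hv.le

theorem stmt_2 (d M : ℕ) (x : Fin M → EuclideanSpace ℝ (Fin d)) (w : ℝ) (hw : 0 < w)
    (f : EuclideanSpace ℝ (Fin d) → ℝ)
    (hf : ∀ z, f z = ∑ m, min (‖x m - z‖ ^ 2) (w ^ 2))
    (z : EuclideanSpace ℝ (Fin d))
    (hz : ∀ m, ‖x m - z‖ ^ 2 ≠ w ^ 2) :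
    (∀ᶠ y in nhds z, DifferentiableAt ℝ f y) ∧
      gradient f z = ∑ i ∈ {i | ‖x i - z‖ ^ 2 < w ^ 2}, (2 : ℝ) • (z - x i) := by
  have hfe : f = fun v => ∑ m, min (‖x m - v‖ ^ 2) (w ^ 2) := funext hf
  have hkey : ∀ y : EuclideanSpace ℝ (Fin d), (∀ m, ‖x m - y‖ ^ 2 ≠ w ^ 2) →
      HasGradientAt f (∑ m, if ‖x m - y‖ ^ 2 < w ^ 2 then (2:ℝ) • (y - x m) else 0) y := by
    intro y hy
    rw [hfe, hasGradientAt_iff_hasFDerivAt, map_sum]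
    exact HasFDerivAt.fun_sum fun m _ =>
      (hasGradientAt_iff_hasFDerivAt.mp (grad_min (x m) y w (hy m)))
  constructor
  · have hU : IsOpen {y : EuclideanSpace ℝ (Fin d) | ∀ m, ‖x m - y‖ ^ 2 ≠ w ^ 2} := by
      rw [Set.setOf_forall]
      exact isOpen_iInter_of_finite fun m =>
        isOpen_ne_fun (by continuity) continuous_const
    filter_upwards [hU.mem_nhds hz] with y hy
    exact (hkey y hy).differentiableAt
  · rw [(hkey z hz).gradient, Finset.sum_filter]
end

section
/- On any open convex set U on which the index set I(z) = {i : ||x_i - z||² < w²} is constant and equal to a set I, the function f(z) = Σ_m min(||x_m - z||², w²) is convex; moreover if I is nonempty then f is strongly convex on U (with modulus 2|I|). -/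
open Finset

lemma comb_sq {E : Type*} [NormedAddCommGroup E] [InnerProductSpace ℝ E]
    (u v : E) (a b : ℝ) (hab : a + b = 1) :
    ‖a • u + b • v‖ ^ 2 = a * ‖u‖ ^ 2 + b * ‖v‖ ^ 2 - a * b * ‖u - v‖ ^ 2 := by
  have h1 := norm_add_sq_real (a • u) (b • v)
  have h2 := norm_sub_sq_real u v
  rw [real_inner_smul_left, real_inner_smul_right, norm_smul, norm_smul] at h1
  simp only [Real.norm_eq_abs, mul_pow, sq_abs] at h1
  linear_combination h1 + a * b * h2 + (a * ‖u‖ ^ 2 + b * ‖v‖ ^ 2) * hab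

lemma key_id {E : Type*} [NormedAddCommGroup E] [InnerProductSpace ℝ E]
    (p u v : E) (a b : ℝ) (hab : a + b = 1) :
    ‖p - (a • u + b • v)‖ ^ 2
      = a * ‖p - u‖ ^ 2 + b * ‖p - v‖ ^ 2 - a * b * ‖u - v‖ ^ 2 := by
  have h1 : p - (a • u + b • v) = a • (p - u) + b • (p - v) := by
    have : a • (p - u) + b • (p - v) = (a + b) • p - (a • u + b • v) := by
      rw [smul_sub, smul_sub, add_smul]; abel
    rw [this, hab, one_smul]
  have h2 : (p - u) - (p - v) = v - u := by abel
  rw [h1, comb_sq _ _ _ _ hab, h2, norm_sub_rev v u]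

theorem stmt_3 (d M : ℕ) (x : Fin M → EuclideanSpace ℝ (Fin d)) (w : ℝ) (hw : 0 < w)
    (f : EuclideanSpace ℝ (Fin d) → ℝ)
    (hf : ∀ z, f z = ∑ m, min (‖x m - z‖ ^ 2) (w ^ 2))
    (U : Set (EuclideanSpace ℝ (Fin d))) (hU : IsOpen U) (hUc : Convex ℝ U)
    (I : Finset (Fin M))
    (hI : ∀ z ∈ U, ({i | ‖x i - z‖ ^ 2 < w ^ 2} : Finset (Fin M)) = I) :
    ConvexOn ℝ U f ∧ (I.Nonempty → StrongConvexOn U (2 * I.card) f) := by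
  -- representation of f on U
  have hrep : ∀ z ∈ U, f z = (∑ i ∈ I, ‖x i - z‖ ^ 2) + ((M : ℝ) - I.card) * w ^ 2 := by
    intro z hz
    have hfe : Finset.univ.filter (fun i => ‖x i - z‖ ^ 2 < w ^ 2)
        = ({i | ‖x i - z‖ ^ 2 < w ^ 2} : Finset (Fin M)) := by ext i; simp
    have hIz : Finset.univ.filter (fun i => ‖x i - z‖ ^ 2 < w ^ 2) = I :=
      hfe.trans (hI z hz)
    rw [hf]
    rw [← Finset.sum_filter_add_sum_filter_not Finset.univ (fun i => ‖x i - z‖ ^ 2 < w ^ 2)]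
    have h1 : ∀ i ∈ Finset.univ.filter (fun i => ‖x i - z‖ ^ 2 < w ^ 2),
        min (‖x i - z‖ ^ 2) (w ^ 2) = ‖x i - z‖ ^ 2 := by
      intro i hi; simp only [Finset.mem_filter] at hi; exact min_eq_left hi.2.le
    have h2 : ∀ i ∈ Finset.univ.filter (fun i => ¬ ‖x i - z‖ ^ 2 < w ^ 2),
        min (‖x i - z‖ ^ 2) (w ^ 2) = w ^ 2 := by
      intro i hi; simp only [Finset.mem_filter, not_lt] at hi; exact min_eq_right hi.2
    rw [Finset.sum_congr rfl h1, Finset.sum_congr rfl h2, hIz, Finset.sum_const, nsmul_eq_mul]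
    congr 2
    rw [Finset.filter_not, hIz, Finset.card_sdiff_of_subset (Finset.subset_univ I)]
    rw [Nat.cast_sub (Finset.card_le_card (Finset.subset_univ I))]
    simp
  -- master identity
  have master : ∀ p ∈ U, ∀ q ∈ U, ∀ a b : ℝ, 0 ≤ a → 0 ≤ b → a + b = 1 →
      f (a • p + b • q) = a * f p + b * f q - (I.card : ℝ) * (a * b * ‖p - q‖ ^ 2) := by
    intro p hp q hq a b ha hb hab
    have hm : a • p + b • q ∈ U := hUc hp hq ha hb hab
    rw [hrep _ hm, hrep _ hp, hrep _ hq]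
    have hs : ∀ i ∈ I, ‖x i - (a • p + b • q)‖ ^ 2
        = a * ‖x i - p‖ ^ 2 + b * ‖x i - q‖ ^ 2 - a * b * ‖p - q‖ ^ 2 := fun i _ =>
      key_id (x i) p q a b hab
    rw [Finset.sum_congr rfl hs, Finset.sum_sub_distrib, Finset.sum_add_distrib,
      ← Finset.mul_sum, ← Finset.mul_sum, Finset.sum_const, nsmul_eq_mul]
    linear_combination (((I.card : ℝ) - M) * w ^ 2) * hab
  constructor
  · refine ⟨hUc, fun p hp q hq a b ha hb hab => ?_⟩
    rw [smul_eq_mul, smul_eq_mul, master p hp q hq a b ha hb hab]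
    nlinarith [Nat.cast_nonneg (α := ℝ) I.card,
      mul_nonneg (mul_nonneg ha hb) (sq_nonneg ‖p - q‖)]
  · intro _
    refine ⟨hUc, fun p hp q hq a b ha hb hab => ?_⟩
    rw [smul_eq_mul, smul_eq_mul, master p hp q hq a b ha hb hab]
    have h2 : ((2 * I.card : ℝ)) / 2 = (I.card : ℝ) := by ring
    push_cast
    nlinarith [sq_nonneg ‖p - q‖]
end

section
/- If z ∈ R^d is a non-smooth point of f, i.e., there exists j with ||x_j - z||² = w², then z is not a stationary point of f: there exists a direction δ with f'(z;δ) < 0. -/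
open Filter Topology RealInnerProductSpace

set_option maxHeartbeats 1000000 in
theorem stmt_6 (d M : ℕ) (x : Fin M → EuclideanSpace ℝ (Fin d)) (w : ℝ) (hw : 0 < w)
    (f : EuclideanSpace ℝ (Fin d) → ℝ)
    (hf : ∀ z, f z = ∑ m, min (‖x m - z‖ ^ 2) (w ^ 2))
    (z : EuclideanSpace ℝ (Fin d))
    (hns : ∃ j, ‖x j - z‖ ^ 2 = w ^ 2) :
    ∃ (δ : EuclideanSpace ℝ (Fin d)) (L : ℝ), L < 0 ∧
      Tendsto (fun α : ℝ => (f (z + α • δ) - f z) / α) (𝓝[>] 0) (𝓝 L) := by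
  classical
  obtain ⟨j, hj⟩ := hns
  -- per-term limit value
  set L : EuclideanSpace ℝ (Fin d) → Fin M → ℝ := fun δ m =>
    if ‖x m - z‖ ^ 2 < w ^ 2 then -2 * (inner ℝ (x m - z) (δ) : ℝ)
    else if ‖x m - z‖ ^ 2 = w ^ 2 then min (-2 * (inner ℝ (x m - z) (δ) : ℝ)) 0 else 0 with hL
  have expand : ∀ (δ : EuclideanSpace ℝ (Fin d)) (m : Fin M) (α : ℝ),
      ‖x m - (z + α • δ)‖ ^ 2
        = ‖x m - z‖ ^ 2 + α * (-2 * (inner ℝ (x m - z) (δ) : ℝ) + α * ‖δ‖ ^ 2) := by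
    intro δ m α
    have h1 : x m - (z + α • δ) = (x m - z) - α • δ := by abel
    rw [h1, norm_sub_sq_real, real_inner_smul_right, norm_smul]
    simp [mul_pow, sq_abs]
    ring
  have key : ∀ (δ : EuclideanSpace ℝ (Fin d)) (m : Fin M),
      Tendsto (fun α : ℝ =>
        (min (‖x m - (z + α • δ)‖ ^ 2) (w ^ 2) - min (‖x m - z‖ ^ 2) (w ^ 2)) / α)
        (𝓝[>] 0) (𝓝 (L δ m)) := by
    intro δ m
    set a : ℝ := (inner ℝ (x m - z) (δ) : ℝ) with ha
    set b : ℝ := ‖δ‖ ^ 2 with hb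
    set c : ℝ := ‖x m - z‖ ^ 2 with hc
    have hcont : Tendsto (fun α : ℝ => -2 * a + α * b) (𝓝[>] 0) (𝓝 (-2 * a)) := by
      have : Tendsto (fun α : ℝ => -2 * a + α * b) (𝓝 0) (𝓝 (-2 * a + 0 * b)) := by
        exact (tendsto_const_nhds.add ((continuous_id.mul continuous_const).tendsto 0))
      simpa using this.mono_left nhdsWithin_le_nhds
    have hgc : Tendsto (fun α : ℝ => c + α * (-2 * a + α * b)) (𝓝 0) (𝓝 c) := by
      have : Continuous (fun α : ℝ => c + α * (-2 * a + α * b)) := by continuity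
      simpa using this.tendsto 0
    rcases lt_trichotomy c (w ^ 2) with hlt | heq | hgt
    · -- strictly inside: derivative -2a
      have hL' : L δ m = -2 * a := by
        simp only [hL]; rw [if_pos hlt]
      rw [hL']
      refine hcont.congr' ?_
      have hev : ∀ᶠ α in 𝓝[>] 0, c + α * (-2 * a + α * b) < w ^ 2 :=
        ((hgc.eventually (eventually_lt_nhds hlt)).filter_mono nhdsWithin_le_nhds)
      filter_upwards [hev, self_mem_nhdsWithin] with α hα hαpos
      rw [expand δ m α, ← hc, min_eq_left hα.le, min_eq_left hlt.le,
        eq_div_iff (Set.mem_Ioi.mp hαpos).ne']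
      ring
    · -- boundary
      have hL' : L δ m = min (-2 * a) 0 := by
        simp only [hL]; rw [if_neg (not_lt_of_ge heq.ge), if_pos heq]
      rw [hL']
      have hmin : Tendsto (fun α : ℝ => min (-2 * a + α * b) 0) (𝓝[>] 0)
          (𝓝 (min (-2 * a) 0)) := hcont.min tendsto_const_nhds
      refine hmin.congr' ?_
      filter_upwards [self_mem_nhdsWithin] with α (hαpos : (0:ℝ) < α)
      rw [expand δ m α, ← hc, heq, min_eq_left le_rfl]
      have : min (w ^ 2 + α * (-2 * a + α * b)) (w ^ 2) - w ^ 2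
          = min (α * (-2 * a + α * b)) 0 := by
        rcases le_total (α * (-2 * a + α * b)) 0 with h | h
        · rw [min_eq_left (by linarith), min_eq_left h]; ring
        · rw [min_eq_right (by linarith), min_eq_right h]; ring
      rw [this, eq_div_iff hαpos.ne']
      rcases le_total (-2 * a + α * b) 0 with h | h
      · rw [min_eq_left (mul_nonpos_of_nonneg_of_nonpos hαpos.le h), min_eq_left h]; ring
      · rw [min_eq_right (mul_nonneg hαpos.le h), min_eq_right h]; ring
    · -- strictly outside: derivative 0
      have hL' : L δ m = 0 := by
        simp only [hL]; rw [if_neg (not_lt_of_gt hgt), if_neg hgt.ne']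
      rw [hL']
      have hev : ∀ᶠ α in 𝓝[>] 0, w ^ 2 < c + α * (-2 * a + α * b) :=
        ((hgc.eventually (eventually_gt_nhds hgt)).filter_mono nhdsWithin_le_nhds)
      refine tendsto_const_nhds.congr' ?_
      filter_upwards [hev] with α hα
      rw [expand δ m α, ← hc, min_eq_right hα.le, min_eq_right hgt.le]
      simp
  -- total limit for any direction
  have total : ∀ (δ : EuclideanSpace ℝ (Fin d)),
      Tendsto (fun α : ℝ => (f (z + α • δ) - f z) / α) (𝓝[>] 0) (𝓝 (∑ m, L δ m)) := by
    intro δ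
    have := tendsto_finset_sum Finset.univ (fun m _ => key δ m)
    refine this.congr ?_
    intro α
    rw [hf, hf, ← Finset.sum_sub_distrib, Finset.sum_div]
  set v : EuclideanSpace ℝ (Fin d) := x j - z with hv
  -- sum of the two directional derivatives is ≤ -2w²
  have hsum : (∑ m, L v m) + (∑ m, L (-v) m) ≤ -2 * w ^ 2 := by
    rw [← Finset.sum_add_distrib]
    have hjval : L v j + L (-v) j = -2 * w ^ 2 := by
      have hinner : (inner ℝ (x j - z) (v) : ℝ) = w ^ 2 := by
        rw [hv, real_inner_self_eq_norm_sq, hj]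
      have hinner' : (inner ℝ (x j - z) (-v) : ℝ) = -(w ^ 2) := by
        rw [inner_neg_right, hinner]
      have hnotlt : ¬ (‖x j - z‖ ^ 2 < w ^ 2) := by rw [hj]; exact lt_irrefl _
      simp only [hL, if_neg hnotlt, if_pos hj, hinner, hinner']
      rw [min_eq_left (by nlinarith), min_eq_right (by nlinarith)]
      simp only [if_pos (show ‖x j - z‖ ^ 2 = w ^ 2 from hj)]
      ring
    have hle : ∀ m ∈ Finset.univ, L v m + L (-v) m
        ≤ (fun m => if m = j then -2 * w ^ 2 else 0) m := by
      intro m _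
      by_cases hm : m = j
      · subst hm; simp [hjval]
      · simp only [hm, if_false]
        simp only [hL, inner_neg_right]
        split_ifs with h1 h2
        · linarith
        · linarith [min_le_right (-2 * (inner ℝ (x m - z) (v) : ℝ)) (0:ℝ),
            min_le_right (-2 * -(inner ℝ (x m - z) (v) : ℝ)) (0:ℝ)]
        · simp
    calc (∑ m, (L v m + L (-v) m))
        ≤ ∑ m, (if m = j then -2 * w ^ 2 else 0) := Finset.sum_le_sum hle
      _ = -2 * w ^ 2 := by
          rw [Finset.sum_ite_eq' Finset.univ j (fun _ => -2 * w ^ 2),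
            if_pos (Finset.mem_univ j)]
  rcases lt_or_ge (∑ m, L v m) 0 with hneg | hpos
  · exact ⟨v, ∑ m, L v m, hneg, total v⟩
  · refine ⟨-v, ∑ m, L (-v) m, ?_, total (-v)⟩
    nlinarith [sq_nonneg w]
end

section
/- The Mean Shift update does not increase f: if z' = (1/|I(z)|) Σ_{i∈I(z)} x_i where I(z) = {i : ||x_i - z||² < w²} is nonempty, then f(z') ≤ f(z). -/
open Finset

theorem stmt_11 (d M : ℕ) (x : Fin M → EuclideanSpace ℝ (Fin d)) (w : ℝ) (hw : 0 < w)
    (f : EuclideanSpace ℝ (Fin d) → ℝ)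
    (hf : ∀ z, f z = ∑ m, min (‖x m - z‖ ^ 2) (w ^ 2))
    (z : EuclideanSpace ℝ (Fin d))
    (I : Finset (Fin M)) (hI : I = {i | ‖x i - z‖ ^ 2 < w ^ 2}) (hne : I.Nonempty)
    (z' : EuclideanSpace ℝ (Fin d)) (hz' : z' = (I.card : ℝ)⁻¹ • ∑ i ∈ I, x i) :
    f z' ≤ f z := by
  have hn : (I.card : ℝ) ≠ 0 := Nat.cast_ne_zero.2 (Finset.card_ne_zero.2 hne)
  have hzero : ∑ i ∈ I, (x i - z') = 0 := by
    rw [Finset.sum_sub_distrib, Finset.sum_const, hz']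
    rw [← Nat.cast_smul_eq_nsmul ℝ, smul_smul, mul_inv_cancel₀ hn, one_smul, sub_self]
  -- key : the mean minimizes sum of squared distances over I
  have key : ∑ i ∈ I, ‖x i - z'‖ ^ 2 ≤ ∑ i ∈ I, ‖x i - z‖ ^ 2 := by
    have hexp : ∀ i ∈ I, ‖x i - z‖ ^ 2 =
        ‖x i - z'‖ ^ 2 + 2 * inner ℝ (x i - z') (z' - z) + ‖z' - z‖ ^ 2 := by
      intro i _
      have h := norm_add_sq_real (x i - z') (z' - z)
      rw [sub_add_sub_cancel] at h
      linarith
    rw [Finset.sum_congr rfl hexp, Finset.sum_add_distrib, Finset.sum_add_distrib]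
    have hcross : ∑ i ∈ I, 2 * (inner ℝ (x i - z') (z' - z) : ℝ) = 0 := by
      rw [← Finset.mul_sum, ← sum_inner, hzero, inner_zero_left, mul_zero]
    have hpos : 0 ≤ ∑ _i ∈ I, ‖z' - z‖ ^ 2 :=
      Finset.sum_nonneg fun _ _ => sq_nonneg _
    linarith
  rw [hf z', hf z]
  rw [← Finset.sum_add_sum_compl I fun m => min (‖x m - z'‖ ^ 2) (w ^ 2),
      ← Finset.sum_add_sum_compl I fun m => min (‖x m - z‖ ^ 2) (w ^ 2)]
  have h1 : ∑ m ∈ I, min (‖x m - z'‖ ^ 2) (w ^ 2) ≤ ∑ m ∈ I, min (‖x m - z‖ ^ 2) (w ^ 2) := by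
    calc ∑ m ∈ I, min (‖x m - z'‖ ^ 2) (w ^ 2)
        ≤ ∑ m ∈ I, ‖x m - z'‖ ^ 2 :=
          Finset.sum_le_sum fun m _ => min_le_left _ _
      _ ≤ ∑ m ∈ I, ‖x m - z‖ ^ 2 := key
      _ = ∑ m ∈ I, min (‖x m - z‖ ^ 2) (w ^ 2) := by
          refine Finset.sum_congr rfl fun m hm => ?_
          have : ‖x m - z‖ ^ 2 < w ^ 2 := by
            have h := hI ▸ Finset.mem_coe.2 hm
            simpa using h
          rw [min_eq_left this.le]
  have h2 : ∑ m ∈ Iᶜ, min (‖x m - z'‖ ^ 2) (w ^ 2) ≤ ∑ m ∈ Iᶜ, min (‖x m - z‖ ^ 2) (w ^ 2) := by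
    refine Finset.sum_le_sum fun m hm => ?_
    have hm' : ¬ ‖x m - z‖ ^ 2 < w ^ 2 := by
      intro hlt
      have : m ∈ I := Finset.mem_coe.1 (hI ▸ (by simpa using hlt : m ∈ {i | ‖x i - z‖ ^ 2 < w ^ 2}))
      exact (Finset.mem_compl.1 hm) this
    rw [min_eq_right (not_lt.1 hm')]
    exact min_le_right _ _
  linarith
end

section
/- If I(z) = {i : ||x_i - z||² < w²} is nonempty and z' = (1/|I(z)|) Σ_{i∈I(z)} x_i, then f(z) - f(z') ≥ |I(z)| · ||z - z'||². In particular, f strictly decreases unless z' = z. -/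
open Finset

theorem stmt_12 (d M : ℕ) (x : Fin M → EuclideanSpace ℝ (Fin d)) (w : ℝ) (hw : 0 < w)
    (f : EuclideanSpace ℝ (Fin d) → ℝ)
    (hf : ∀ z, f z = ∑ m, min (‖x m - z‖ ^ 2) (w ^ 2))
    (z : EuclideanSpace ℝ (Fin d))
    (I : Finset (Fin M)) (hI : I = {i | ‖x i - z‖ ^ 2 < w ^ 2}) (hne : I.Nonempty)
    (z' : EuclideanSpace ℝ (Fin d)) (hz' : z' = (I.card : ℝ)⁻¹ • ∑ i ∈ I, x i) :
    (I.card : ℝ) * ‖z - z'‖ ^ 2 ≤ f z - f z' ∧ (z' ≠ z → f z' < f z) := by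
  have hmem : ∀ i, i ∈ I ↔ ‖x i - z‖ ^ 2 < w ^ 2 := by
    intro i; rw [← Finset.mem_coe, hI]; simp
  have hcard : (0:ℝ) < I.card := by exact_mod_cast Finset.card_pos.mpr hne
  have hsum : ∑ i ∈ I, (x i - z') = 0 := by
    rw [Finset.sum_sub_distrib, Finset.sum_const, hz']
    rw [← Nat.cast_smul_eq_nsmul ℝ, smul_smul, mul_inv_cancel₀ (ne_of_gt hcard), one_smul,
      sub_self]
  have key : ∑ i ∈ I, ‖x i - z‖ ^ 2
      = (∑ i ∈ I, ‖x i - z'‖ ^ 2) + (I.card : ℝ) * ‖z - z'‖ ^ 2 := by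
    have expand : ∀ i, ‖x i - z‖ ^ 2
        = ‖x i - z'‖ ^ 2 + 2 * (inner ℝ (x i - z') (z' - z) : ℝ) + ‖z' - z‖ ^ 2 := by
      intro i
      have h : x i - z = (x i - z') + (z' - z) := by abel
      rw [h, norm_add_sq_real]
    simp only [expand]
    rw [Finset.sum_add_distrib, Finset.sum_add_distrib, Finset.sum_const, ← Finset.mul_sum,
      ← sum_inner, hsum, inner_zero_left, mul_zero, add_zero, nsmul_eq_mul,
      norm_sub_rev z' z]
  -- pointwise bounds
  set g : Fin M → ℝ := fun m => min (‖x m - z‖ ^ 2) (w ^ 2) - min (‖x m - z'‖ ^ 2) (w ^ 2) with hg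
  have hg0 : ∀ m ∈ Finset.univ, m ∉ I → 0 ≤ g m := by
    intro m _ hm
    have h1 : ¬ ‖x m - z‖ ^ 2 < w ^ 2 := fun h => hm ((hmem m).mpr h)
    have : min (‖x m - z‖ ^ 2) (w ^ 2) = w ^ 2 := min_eq_right (le_of_not_gt h1)
    simp only [hg, this, sub_nonneg]
    exact min_le_right _ _
  have hgI : ∀ i ∈ I, ‖x i - z‖ ^ 2 - ‖x i - z'‖ ^ 2 ≤ g i := by
    intro i hi
    have h1 : min (‖x i - z‖ ^ 2) (w ^ 2) = ‖x i - z‖ ^ 2 :=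
      min_eq_left (le_of_lt ((hmem i).mp hi))
    simp only [hg, h1]
    have := min_le_left (‖x i - z'‖ ^ 2) (w ^ 2)
    linarith
  have h2 : ∑ i ∈ I, g i ≤ ∑ m, g m :=
    Finset.sum_le_sum_of_subset_of_nonneg (Finset.subset_univ I) hg0
  have h1 : (∑ i ∈ I, ‖x i - z‖ ^ 2) - ∑ i ∈ I, ‖x i - z'‖ ^ 2 ≤ ∑ i ∈ I, g i := by
    rw [← Finset.sum_sub_distrib]
    exact Finset.sum_le_sum hgI
  have hfz : f z - f z' = ∑ m, g m := by
    rw [hf z, hf z', ← Finset.sum_sub_distrib]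
  have main : (I.card : ℝ) * ‖z - z'‖ ^ 2 ≤ f z - f z' := by
    rw [hfz]; linarith
  refine ⟨main, fun hne' => ?_⟩
  have hpos : 0 < ‖z - z'‖ ^ 2 := by
    have : z - z' ≠ 0 := sub_ne_zero.mpr (fun h => hne' h.symm)
    exact pow_pos (norm_pos_iff.mpr this) 2
  nlinarith
end

section
/- Suppose z = (1/|I(z)|) Σ_{i∈I(z)} x_i with I(z) = {i : ||x_i - z||² < w²} nonempty, and there exists j with ||x_j - z||² = w². Let z' = (1/(|I(z)|+1)) (x_j + Σ_{i∈I(z)} x_i). Then f(z) - f(z') ≥ w²/(|I(z)|+1) > 0. -/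
open Finset

theorem stmt_13 (d M : ℕ) (x : Fin M → EuclideanSpace ℝ (Fin d)) (w : ℝ) (hw : 0 < w)
    (f : EuclideanSpace ℝ (Fin d) → ℝ)
    (hf : ∀ z, f z = ∑ m, min (‖x m - z‖ ^ 2) (w ^ 2))
    (z : EuclideanSpace ℝ (Fin d))
    (I : Finset (Fin M)) (hI : I = {i | ‖x i - z‖ ^ 2 < w ^ 2}) (hne : I.Nonempty)
    (hfix : z = (I.card : ℝ)⁻¹ • ∑ i ∈ I, x i)
    (j : Fin M) (hj : ‖x j - z‖ ^ 2 = w ^ 2)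
    (z' : EuclideanSpace ℝ (Fin d))
    (hz' : z' = ((I.card : ℝ) + 1)⁻¹ • (x j + ∑ i ∈ I, x i)) :
    w ^ 2 / ((I.card : ℝ) + 1) ≤ f z - f z' ∧ 0 < w ^ 2 / ((I.card : ℝ) + 1) := by
  have hn : (0:ℝ) < I.card := by exact_mod_cast Finset.card_pos.mpr hne
  set n : ℝ := (I.card : ℝ) with hndef
  have hn1 : (0:ℝ) < n + 1 := by linarith
  have hn1' : n + 1 ≠ 0 := ne_of_gt hn1
  refine ⟨?_, by positivity⟩
  have hmem : ∀ i ∈ I, ‖x i - z‖ ^ 2 < w ^ 2 := by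
    intro i hi
    have h2 : i ∈ ({i | ‖x i - z‖ ^ 2 < w ^ 2} : Set (Fin M)) := hI ▸ Finset.mem_coe.mpr hi
    exact h2
  have hnmem : ∀ i, i ∉ I → w ^ 2 ≤ ‖x i - z‖ ^ 2 := by
    intro i hi
    by_contra h
    push_neg at h
    have h2 : i ∈ ({i | ‖x i - z‖ ^ 2 < w ^ 2} : Set (Fin M)) := h
    rw [← hI] at h2
    exact hi (Finset.mem_coe.mp h2)
  have hjI : j ∉ I := fun h => absurd hj (ne_of_lt (hmem j h))
  have hS : ∑ i ∈ I, x i = n • z := by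
    rw [hfix, smul_inv_smul₀ (ne_of_gt hn)]
  have hv : z' - z = (n + 1)⁻¹ • (x j - z) := by
    rw [hz', hS]
    match_scalars <;> field_simp <;> ring
  set c : ℝ := (n + 1)⁻¹ with hcdef
  set v : EuclideanSpace ℝ (Fin d) := z' - z with hvdef
  -- norm of v
  have hvu : v = c • (x j - z) := hv
  -- expansion lemma
  have hexp : ∀ a : EuclideanSpace ℝ (Fin d),
      ‖a - z'‖ ^ 2 = ‖a - z‖ ^ 2 - 2 * inner ℝ (a - z) v + ‖v‖ ^ 2 := by
    intro a
    have : a - z' = (a - z) - v := by rw [hvdef]; abel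
    rw [this, norm_sub_sq_real]
  -- sum of x i - z over I is zero
  have hzero : ∑ i ∈ I, (x i - z) = (0 : EuclideanSpace ℝ (Fin d)) := by
    rw [Finset.sum_sub_distrib, hS, Finset.sum_const, ← Nat.cast_smul_eq_nsmul ℝ, hndef,
      sub_self]
  -- the key sum identity
  have hsumI : ∑ i ∈ I, (‖x i - z‖ ^ 2 - ‖x i - z'‖ ^ 2) = - n * ‖v‖ ^ 2 := by
    have : ∀ i ∈ I, ‖x i - z‖ ^ 2 - ‖x i - z'‖ ^ 2
        = 2 * inner ℝ (x i - z) v - ‖v‖ ^ 2 := by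
      intro i _; rw [hexp (x i)]; ring
    rw [Finset.sum_congr rfl this, Finset.sum_sub_distrib, ← Finset.mul_sum, ← sum_inner,
      hzero, inner_zero_left, Finset.sum_const, nsmul_eq_mul, hndef]
    ring
  -- norm of x j - z'
  have hjz' : ‖x j - z'‖ ^ 2 = w ^ 2 - 2 * c * w ^ 2 + ‖v‖ ^ 2 := by
    rw [hexp (x j), hj, hvu, real_inner_smul_right, real_inner_self_eq_norm_sq, hj]
    ring
  have hvnorm : ‖v‖ ^ 2 = c ^ 2 * w ^ 2 := by
    rw [hvu, norm_smul, mul_pow, hj, Real.norm_eq_abs, sq_abs]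
  -- lower bound on f z - f z'
  have hfz : f z - f z' = ∑ m, (min (‖x m - z‖ ^ 2) (w ^ 2) - min (‖x m - z'‖ ^ 2) (w ^ 2)) := by
    rw [hf z, hf z', Finset.sum_sub_distrib]
  set g : Fin M → ℝ := fun m => min (‖x m - z‖ ^ 2) (w ^ 2) - min (‖x m - z'‖ ^ 2) (w ^ 2)
    with hgdef
  have hsub : insert j I ⊆ Finset.univ := Finset.subset_univ _
  have step1 : ∑ m ∈ insert j I, g m ≤ ∑ m, g m := by
    apply Finset.sum_le_sum_of_subset_of_nonneg hsub
    intro m _ hm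
    have hmI : m ∉ I := fun h => hm (Finset.mem_insert_of_mem h)
    have h1 : min (‖x m - z‖ ^ 2) (w ^ 2) = w ^ 2 := min_eq_right (hnmem m hmI)
    have h2 : min (‖x m - z'‖ ^ 2) (w ^ 2) ≤ w ^ 2 := min_le_right _ _
    simp only [hgdef, h1]
    linarith
  have step2 : (w ^ 2 - ‖x j - z'‖ ^ 2) + ∑ i ∈ I, (‖x i - z‖ ^ 2 - ‖x i - z'‖ ^ 2)
      ≤ ∑ m ∈ insert j I, g m := by
    rw [Finset.sum_insert hjI]
    apply add_le_add
    · have h1 : min (‖x j - z‖ ^ 2) (w ^ 2) = w ^ 2 := by rw [hj]; simp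
      have h2 : min (‖x j - z'‖ ^ 2) (w ^ 2) ≤ ‖x j - z'‖ ^ 2 := min_le_left _ _
      simp only [hgdef, h1]
      linarith
    · apply Finset.sum_le_sum
      intro i hi
      have h1 : min (‖x i - z‖ ^ 2) (w ^ 2) = ‖x i - z‖ ^ 2 := min_eq_left (le_of_lt (hmem i hi))
      have h2 : min (‖x i - z'‖ ^ 2) (w ^ 2) ≤ ‖x i - z'‖ ^ 2 := min_le_left _ _
      simp only [hgdef, h1]
      linarith
  -- exact value of the lower bound
  have hval : (w ^ 2 - ‖x j - z'‖ ^ 2) + ∑ i ∈ I, (‖x i - z‖ ^ 2 - ‖x i - z'‖ ^ 2)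
      = w ^ 2 / (n + 1) := by
    rw [hsumI, hjz', hvnorm, hcdef]
    field_simp
    ring
  rw [hfz]
  calc w ^ 2 / (n + 1) = (w ^ 2 - ‖x j - z'‖ ^ 2) + ∑ i ∈ I, (‖x i - z‖ ^ 2 - ‖x i - z'‖ ^ 2) :=
        hval.symm
    _ ≤ ∑ m ∈ insert j I, g m := step2
    _ ≤ ∑ m, g m := step1
end

section
/- The modified Epanechnikov Mean Shift iterates (Algorithm 2) terminate at a local minimum of f(z) = Σ_m min(||x_m - z||², w²) within a finite number of iterations, when initialized at any data point x_n with M ≥ 1. -/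
open Finset

variable {d M : ℕ}

/-- The set of indices of data points strictly within distance `w` of `z`. -/
noncomputable def msI (x : Fin M → EuclideanSpace ℝ (Fin d)) (w : ℝ)
    (z : EuclideanSpace ℝ (Fin d)) : Finset (Fin M) :=
  {i | ‖x i - z‖ ^ 2 < w ^ 2}

/-- Mean of the points indexed by a finset. -/
noncomputable def msMean (x : Fin M → EuclideanSpace ℝ (Fin d)) (I : Finset (Fin M)) :
    EuclideanSpace ℝ (Fin d) :=
  (I.card : ℝ)⁻¹ • ∑ i ∈ I, x i

/-- Terminal condition of Algorithm 2: fixed point of the mean-shift map,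
with no data point exactly on the sphere of radius `w`. -/
def msTerminal (x : Fin M → EuclideanSpace ℝ (Fin d)) (w : ℝ)
    (z : EuclideanSpace ℝ (Fin d)) : Prop :=
  msMean x (msI x w z) = z ∧ ∀ j, ‖x j - z‖ ^ 2 ≠ w ^ 2

/-- One (possibly nondeterministic) iteration of Algorithm 2. -/
def msStep (x : Fin M → EuclideanSpace ℝ (Fin d)) (w : ℝ)
    (z z' : EuclideanSpace ℝ (Fin d)) : Prop :=
  (msMean x (msI x w z) ≠ z ∧ z' = msMean x (msI x w z)) ∨
  (msMean x (msI x w z) = z ∧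
    ∃ j, ‖x j - z‖ ^ 2 = w ^ 2 ∧ z' = msMean x (insert j (msI x w z)))

/-- The objective function. -/
noncomputable def fval (x : Fin M → EuclideanSpace ℝ (Fin d)) (w : ℝ)
    (z : EuclideanSpace ℝ (Fin d)) : ℝ :=
  ∑ m, min (‖x m - z‖ ^ 2) (w ^ 2)

lemma mem_msI {x : Fin M → EuclideanSpace ℝ (Fin d)} {w : ℝ}
    {z : EuclideanSpace ℝ (Fin d)} {i : Fin M} :
    i ∈ msI x w z ↔ ‖x i - z‖ ^ 2 < w ^ 2 := by
  simp [msI]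

lemma sum_sub_mean {x : Fin M → EuclideanSpace ℝ (Fin d)} {I : Finset (Fin M)}
    (hI : I.Nonempty) : ∑ i ∈ I, (x i - msMean x I) = 0 := by
  have hc : (I.card : ℝ) ≠ 0 := Nat.cast_ne_zero.mpr (Finset.card_ne_zero_of_mem hI.choose_spec)
  rw [Finset.sum_sub_distrib, Finset.sum_const, msMean, ← Nat.cast_smul_eq_nsmul ℝ, smul_smul,
    mul_inv_cancel₀ hc, one_smul, sub_self]

lemma sum_sq_decomp {x : Fin M → EuclideanSpace ℝ (Fin d)} {I : Finset (Fin M)}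
    (hI : I.Nonempty) (z : EuclideanSpace ℝ (Fin d)) :
    ∑ i ∈ I, ‖x i - z‖ ^ 2
      = ∑ i ∈ I, ‖x i - msMean x I‖ ^ 2 + I.card * ‖z - msMean x I‖ ^ 2 := by
  set μ := msMean x I with hμ
  have h : ∀ i ∈ I, ‖x i - z‖ ^ 2
      = ‖x i - μ‖ ^ 2 + (2 * inner ℝ (x i - μ) (μ - z) + ‖μ - z‖ ^ 2) := by
    intro i _
    have hxz : x i - z = (x i - μ) + (μ - z) := by abel
    rw [hxz, norm_add_sq_real]
    ring
  rw [Finset.sum_congr rfl h, Finset.sum_add_distrib, Finset.sum_add_distrib,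
    ← Finset.mul_sum, ← sum_inner, sum_sub_mean hI]
  simp [Finset.sum_const, nsmul_eq_mul, norm_sub_rev z μ]

lemma fval_eq (x : Fin M → EuclideanSpace ℝ (Fin d)) (w : ℝ)
    (z : EuclideanSpace ℝ (Fin d)) :
    fval x w z = ∑ i ∈ msI x w z, ‖x i - z‖ ^ 2 + ∑ _i ∈ univ \ msI x w z, w ^ 2 := by
  rw [fval, ← Finset.sum_sdiff (Finset.subset_univ (msI x w z)), add_comm]
  congr 1
  · exact Finset.sum_congr rfl fun i hi => min_eq_left (le_of_lt (mem_msI.mp hi))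
  · refine Finset.sum_congr rfl fun i hi => min_eq_right ?_
    have := (Finset.mem_sdiff.mp hi).2
    exact le_of_not_gt (fun h => this (mem_msI.mpr h))

lemma fval_le (x : Fin M → EuclideanSpace ℝ (Fin d)) (w : ℝ) (J : Finset (Fin M))
    (z : EuclideanSpace ℝ (Fin d)) :
    fval x w z ≤ ∑ i ∈ J, ‖x i - z‖ ^ 2 + ∑ _i ∈ univ \ J, w ^ 2 := by
  rw [fval, ← Finset.sum_sdiff (Finset.subset_univ J), add_comm]
  exact add_le_add (Finset.sum_le_sum fun i _ => min_le_left _ _)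
    (Finset.sum_le_sum fun i _ => min_le_right _ _)

lemma sum_sub_fix {x : Fin M → EuclideanSpace ℝ (Fin d)} {I : Finset (Fin M)}
    {z : EuclideanSpace ℝ (Fin d)} (hfix : msMean x I = z) :
    ∑ i ∈ I, (x i - z) = 0 := by
  rcases I.eq_empty_or_nonempty with h | h
  · simp [h]
  · rw [← hfix]; exact sum_sub_mean h

lemma step_decrease {x : Fin M → EuclideanSpace ℝ (Fin d)} {w : ℝ} (hw : 0 < w)
    {z z' : EuclideanSpace ℝ (Fin d)} (hne : (msI x w z).Nonempty)
    (hstep : msStep x w z z') : fval x w z' < fval x w z := by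
  rcases hstep with ⟨hneq, hz'⟩ | ⟨hfix, j, hj, hz'⟩
  · -- Case A
    set I := msI x w z with hI
    have hdec := sum_sq_decomp (x := x) hne z
    have hcard : (0 : ℝ) < I.card := by
      exact_mod_cast Finset.card_pos.mpr hne
    have hpos : 0 < (I.card : ℝ) * ‖z - msMean x I‖ ^ 2 := by
      apply mul_pos hcard
      have h0 : z - msMean x I ≠ 0 := sub_ne_zero.mpr (fun h => hneq h.symm)
      exact pow_pos (norm_pos_iff.mpr h0) 2
    calc fval x w z' ≤ ∑ i ∈ I, ‖x i - z'‖ ^ 2 + ∑ _i ∈ univ \ I, w ^ 2 := fval_le x w I z'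
      _ = ∑ i ∈ I, ‖x i - msMean x I‖ ^ 2 + ∑ _i ∈ univ \ I, w ^ 2 := by rw [hz']
      _ < ∑ i ∈ I, ‖x i - z‖ ^ 2 + ∑ _i ∈ univ \ I, w ^ 2 := by
          rw [hdec]; linarith
      _ = fval x w z := (fval_eq x w z).symm
  · -- Case B
    set I := msI x w z with hI
    have hjI : j ∉ I := fun h => absurd (mem_msI.mp h) (by rw [hj]; exact lt_irrefl _)
    set J := insert j I with hJ
    have hJne : J.Nonempty := ⟨j, Finset.mem_insert_self _ _⟩
    have hxj : x j ≠ z := by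
      intro h
      rw [h, sub_self] at hj
      simp at hj
      nlinarith
    have hz'ne : z' ≠ z := by
      intro h
      have h0 : ∑ i ∈ J, (x i - z) = 0 := by
        rw [← h, hz']; exact sum_sub_mean hJne
      rw [hJ, Finset.sum_insert hjI, sum_sub_fix hfix, add_zero] at h0
      exact hxj (sub_eq_zero.mp h0)
    have hdec := sum_sq_decomp (x := x) hJne z
    have hcard : (0 : ℝ) < J.card := by exact_mod_cast Finset.card_pos.mpr hJne
    have hpos : 0 < (J.card : ℝ) * ‖z - msMean x J‖ ^ 2 := by
      apply mul_pos hcard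
      have h0 : z - msMean x J ≠ 0 := by
        rw [← hz']; exact sub_ne_zero.mpr (fun h => hz'ne h.symm)
      exact pow_pos (norm_pos_iff.mpr h0) 2
    have hsplit : (univ \ I : Finset (Fin M)) = insert j (univ \ J) := by
      rw [hJ, Finset.sdiff_insert]
      rw [Finset.insert_erase (Finset.mem_sdiff.mpr ⟨Finset.mem_univ j, hjI⟩)]
    have hjnotin : j ∉ univ \ J := by
      simp [hJ]
    calc fval x w z' ≤ ∑ i ∈ J, ‖x i - z'‖ ^ 2 + ∑ _i ∈ univ \ J, w ^ 2 := fval_le x w J z'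
      _ = ∑ i ∈ J, ‖x i - msMean x J‖ ^ 2 + ∑ _i ∈ univ \ J, w ^ 2 := by rw [hz']
      _ < ∑ i ∈ J, ‖x i - z‖ ^ 2 + ∑ _i ∈ univ \ J, w ^ 2 := by rw [hdec]; linarith
      _ = ∑ i ∈ I, ‖x i - z‖ ^ 2 + ∑ _i ∈ univ \ I, w ^ 2 := by
          rw [hJ, Finset.sum_insert hjI, hsplit, Finset.sum_insert hjnotin, hj]
          ring
      _ = fval x w z := (fval_eq x w z).symm

lemma msI_nonempty_of_lt {x : Fin M → EuclideanSpace ℝ (Fin d)} {w : ℝ}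
    {z : EuclideanSpace ℝ (Fin d)} (h : fval x w z < M * w ^ 2) :
    (msI x w z).Nonempty := by
  by_contra hemp
  rw [Finset.not_nonempty_iff_eq_empty] at hemp
  have : fval x w z = M * w ^ 2 := by
    rw [fval]
    have : ∀ m : Fin M, min (‖x m - z‖ ^ 2) (w ^ 2) = w ^ 2 := by
      intro m
      refine min_eq_right (le_of_not_gt fun hc => ?_)
      have : m ∈ msI x w z := mem_msI.mpr hc
      simp [hemp] at this
    rw [Finset.sum_congr rfl fun m _ => this m]
    simp [Finset.card_univ, mul_comm]
  linarith

lemma fval_init_lt {x : Fin M → EuclideanSpace ℝ (Fin d)} {w : ℝ} (hw : 0 < w)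
    (hM : 1 ≤ M) (n : Fin M) : fval x w (x n) < M * w ^ 2 := by
  have h := fval_le x w {n} (x n)
  simp only [Finset.sum_singleton, sub_self, norm_zero] at h
  have hcard : (univ \ ({n} : Finset (Fin M))).card = M - 1 := by
    rw [Finset.card_sdiff_of_subset (Finset.subset_univ _), Finset.card_univ, Finset.card_singleton,
      Fintype.card_fin]
  have hsum : ∑ _i ∈ univ \ ({n} : Finset (Fin M)), w ^ 2 = (M - 1 : ℕ) * w ^ 2 := by
    rw [Finset.sum_const, hcard, nsmul_eq_mul]
  have hlt : ((M - 1 : ℕ) : ℝ) < M := by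
    have : M - 1 < M := Nat.sub_lt (by omega) one_pos
    exact_mod_cast this
  have hw2 : 0 < w ^ 2 := by positivity
  calc fval x w (x n) ≤ 0 + (M - 1 : ℕ) * w ^ 2 := by
        rw [← hsum]; simpa using h
    _ < M * w ^ 2 := by nlinarith
  
lemma terminal_isLocalMin {x : Fin M → EuclideanSpace ℝ (Fin d)} {w : ℝ}
    {zs : EuclideanSpace ℝ (Fin d)} (ht : msTerminal x w zs) :
    IsLocalMin (fval x w) zs := by
  set I := msI x w zs with hI
  have hev : ∀ᶠ z' in nhds zs, ∀ i : Fin M,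
      (i ∈ I → ‖x i - z'‖ ^ 2 < w ^ 2) ∧ (i ∉ I → w ^ 2 < ‖x i - z'‖ ^ 2) := by
    rw [Filter.eventually_all]
    intro i
    have hcont : Continuous fun z' : EuclideanSpace ℝ (Fin d) => ‖x i - z'‖ ^ 2 := by
      exact (continuous_const.sub continuous_id).norm.pow 2
    by_cases hi : i ∈ I
    · have h1 : ∀ᶠ z' in nhds zs, ‖x i - z'‖ ^ 2 < w ^ 2 :=
        hcont.continuousAt.eventually_lt continuousAt_const (mem_msI.mp hi)
      filter_upwards [h1] with z' h1
      exact ⟨fun _ => h1, fun h => absurd hi h⟩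
    · have hgt : w ^ 2 < ‖x i - zs‖ ^ 2 := by
        have h1 : ¬ ‖x i - zs‖ ^ 2 < w ^ 2 := fun h => hi (mem_msI.mpr h)
        have h2 := ht.2 i
        rcases lt_or_eq_of_le (le_of_not_gt h1) with h | h
        · exact h
        · exact absurd h.symm h2
      have h1 : ∀ᶠ z' in nhds zs, w ^ 2 < ‖x i - z'‖ ^ 2 :=
        continuousAt_const.eventually_lt hcont.continuousAt hgt
      filter_upwards [h1] with z' h1
      exact ⟨fun h => absurd h hi, fun _ => h1⟩
  filter_upwards [hev] with z' hz'
  have hIeq : msI x w z' = I := by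
    ext i
    rw [mem_msI]
    constructor
    · intro h
      by_contra hi
      exact absurd h (not_lt_of_gt ((hz' i).2 hi))
    · exact fun hi => (hz' i).1 hi
  rw [fval_eq x w z', fval_eq x w zs, hIeq, ← hI]
  rcases I.eq_empty_or_nonempty with h | h
  · simp [h]
  · have hdec := sum_sq_decomp (x := x) h z'
    rw [ht.1] at hdec
    have : (0:ℝ) ≤ I.card * ‖z' - zs‖ ^ 2 := by positivity
    linarith

theorem stmt_18 (d M : ℕ) (hM : 1 ≤ M)
    (x : Fin M → EuclideanSpace ℝ (Fin d)) (w : ℝ) (hw : 0 < w)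
    (f : EuclideanSpace ℝ (Fin d) → ℝ)
    (hf : ∀ z, f z = ∑ m, min (‖x m - z‖ ^ 2) (w ^ 2))
    (n : Fin M) (z : ℕ → EuclideanSpace ℝ (Fin d))
    (hinit : z 0 = x n)
    (hiter : ∀ t, (msTerminal x w (z t) → z (t + 1) = z t) ∧
                  (¬ msTerminal x w (z t) → msStep x w (z t) (z (t + 1)))) :
    ∃ T, msTerminal x w (z T) ∧ IsLocalMin f (z T) := by
  have hfe : f = fval x w := funext hf
  have hterm : ∃ T, msTerminal x w (z T) := by
    by_contra hnot
    push_neg at hnot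
    have hbound : ∀ t, fval x w (z t) < M * w ^ 2 ∧
        fval x w (z (t + 1)) < fval x w (z t) := by
      intro t
      induction t with
      | zero =>
        have h0 : fval x w (z 0) < M * w ^ 2 := by rw [hinit]; exact fval_init_lt hw hM n
        exact ⟨h0, step_decrease hw (msI_nonempty_of_lt h0) ((hiter 0).2 (hnot 0))⟩
      | succ t ih =>
        have h1 : fval x w (z (t+1)) < M * w ^ 2 := lt_trans ih.2 ih.1
        exact ⟨h1, step_decrease hw (msI_nonempty_of_lt h1) ((hiter (t+1)).2 (hnot (t+1)))⟩
    have hanti : StrictAnti fun t => fval x w (z t) :=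
      strictAnti_nat_of_succ_lt fun t => (hbound t).2
    have hinj : Function.Injective z := by
      intro a b hab
      by_contra hne
      rcases lt_or_gt_of_ne hne with h | h
      · exact absurd (congrArg (fval x w) hab) (ne_of_gt (hanti h))
      · exact absurd (congrArg (fval x w) hab) (ne_of_lt (hanti h))
    have hmem : ∀ t, z t ∈ (Set.range (msMean x) ∪ {x n} : Set (EuclideanSpace ℝ (Fin d))) := by
      intro t
      cases t with
      | zero => right; simp [hinit]
      | succ t =>
        left
        rcases (hiter t).2 (hnot t) with ⟨_, hz'⟩ | ⟨_, j, _, hz'⟩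
        · exact ⟨_, hz'.symm⟩
        · exact ⟨_, hz'.symm⟩
    have hfin : (Set.range (msMean x) ∪ {x n} : Set (EuclideanSpace ℝ (Fin d))).Finite :=
      (Set.finite_range _).union (Set.finite_singleton _)
    exact (Set.infinite_of_injective_forall_mem hinj hmem) hfin
  obtain ⟨T, hT⟩ := hterm
  exact ⟨T, hT, hfe ▸ terminal_isLocalMin hT⟩
end
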